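/- Pinching-time selection lemma: let f : [0,∞) → [0,∞) be a bounded function. Then for every integer i ≥ 1 there exists s ≥ i such that f(s + σ) ≤ (1 + 1/i) f(s) for all σ ∈ (0, i]. -/
import Mathlib


theorem stmt_11
    (f : ℝ → ℝ)
    (hf0 : ∀ s : ℝ, 0 ≤ s → 0 ≤ f s)
    (hbdd : ∃ M : ℝ, ∀ s : ℝ, 0 ≤ s → f s ≤ M) :
    ∀ i : ℕ, 1 ≤ i → ∃ s : ℝ, (i : ℝ) ≤ s ∧
      ∀ σ : ℝ, 0 < σ → σ ≤ (i : ℝ) → f (s + σ) ≤ (1 + 1 / (i : ℝ)) * f s := by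
  intro i hi
  by_contra hcon
  push_neg at hcon
  obtain ⟨M, hM⟩ := hbdd
  have hipos : (0 : ℝ) < (i : ℝ) := by exact_mod_cast hi
  have hq : (1 : ℝ) < 1 + 1 / (i : ℝ) := by
    have : (0:ℝ) < 1 / (i:ℝ) := by positivity
    linarith
  -- step: for every s ≥ i there is t > s with t ≥ i and (1+1/i) f s < f t
  have H : ∀ s : ℝ, (i : ℝ) ≤ s → ∃ t : ℝ, (i : ℝ) ≤ t ∧ s < t ∧
      (1 + 1 / (i : ℝ)) * f s < f t := by
    intro s hs
    obtain ⟨σ, hσ0, hσi, hlt⟩ := hcon s hs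
    exact ⟨s + σ, le_trans hs (by linarith), by linarith, hlt⟩
  choose g hg1 hg2 hg3 using H
  have key : ∀ n : ℕ, ∃ s : ℝ, (i : ℝ) ≤ s ∧
      (1 + 1 / (i : ℝ)) ^ n * f (g (i : ℝ) le_rfl) ≤ f s := by
    intro n
    induction n with
    | zero =>
      exact ⟨g (i:ℝ) le_rfl, hg1 _ _, by simp⟩
    | succ n ih =>
      obtain ⟨s, hs, hfs⟩ := ih
      refine ⟨g s hs, hg1 _ _, ?_⟩
      have := hg3 s hs
      have hq0 : (0:ℝ) < 1 + 1 / (i:ℝ) := by linarith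
      calc (1 + 1 / (i : ℝ)) ^ (n+1) * f (g (i : ℝ) le_rfl)
          = (1 + 1 / (i:ℝ)) * ((1 + 1 / (i : ℝ)) ^ n * f (g (i : ℝ) le_rfl)) := by ring
        _ ≤ (1 + 1 / (i:ℝ)) * f s := by
            exact mul_le_mul_of_nonneg_left hfs (le_of_lt hq0)
        _ ≤ f (g s hs) := le_of_lt this
  -- f (g i) > 0
  have hipos' : (0:ℝ) ≤ (i:ℝ) := le_of_lt hipos
  have hf0i : 0 ≤ f (i:ℝ) := hf0 _ hipos'
  have hpos : 0 < f (g (i:ℝ) le_rfl) := by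
    have := hg3 (i:ℝ) le_rfl
    nlinarith
  -- contradiction with boundedness
  obtain ⟨n, hn⟩ := pow_unbounded_of_one_lt (M / f (g (i:ℝ) le_rfl)) hq
  obtain ⟨s, hs, hfs⟩ := key n
  have hMs : f s ≤ M := hM s (le_trans hipos' hs)
  have : M < (1 + 1 / (i:ℝ)) ^ n * f (g (i:ℝ) le_rfl) := by
    rw [div_lt_iff₀ hpos] at hn
    linarith
  linarith
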